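/- Let α = (α_k)_{k≥1} be a non-decreasing admissible sequence, and assume there exists C > 1 such that the sequence (φ_α(n)/φ_α(Cn))_n is eventually non-increasing. Then the lower α-density dlow_α and the natural lower density dlow are equivalent (i.e. for every E ⊆ ℕ, dlow_α(E) > 0 if and only if dlow(E) > 0) if and only if φ_α satisfies the condition Δ2. -/

import Mathlib

/-- A sequence `(α_k)_{k ≥ 1}` of non-negative reals is admissible if `∑ α_k = ∞`
and `α_n / ∑_{j=1}^n α_j → 0`. -/
def Admissible (α : ℕ → ℝ) : Prop :=
  (∀ k, 1 ≤ k → 0 ≤ α k) ∧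
  Filter.Tendsto (fun n : ℕ => ∑ k ∈ Finset.Icc 1 n, α k) Filter.atTop Filter.atTop ∧
  Filter.Tendsto (fun n : ℕ => α n / ∑ k ∈ Finset.Icc 1 n, α k) Filter.atTop (nhds 0)

/-- `φ_α(x) = ∑_{k=1}^{⌊x⌋} α_k` for real `x`. -/
noncomputable def phiAlpha (α : ℕ → ℝ) (x : ℝ) : ℝ :=
  ∑ k ∈ Finset.Icc 1 ⌊x⌋₊, α k

/-- `φ_α` satisfies the condition `Δ2` if `φ_α(2x) ≤ K φ_α(x)` for some `K > 0` and all
sufficiently large `x`. -/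
def Delta2 (α : ℕ → ℝ) : Prop :=
  ∃ K : ℝ, 0 < K ∧ ∃ x₀ : ℝ, ∀ x : ℝ, x₀ ≤ x → phiAlpha α (2 * x) ≤ K * phiAlpha α x

/-- Lower `α`-density of a set of natural numbers. -/
noncomputable def alphaLowerDensity (α : ℕ → ℝ) (E : Set ℕ) : ℝ :=
  Filter.liminf (fun n : ℕ =>
    (∑ k ∈ Finset.Icc 1 n, E.indicator (fun k => α k) k) /
      (∑ k ∈ Finset.Icc 1 n, α k)) Filter.atTop

/-- Natural lower density of a set of natural numbers. -/
noncomputable def lowerDensity (E : Set ℕ) : ℝ :=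
  Filter.liminf (fun n : ℕ =>
    (∑ k ∈ Finset.range (n + 1), E.indicator (fun _ => (1 : ℝ)) k) / n) Filter.atTop

namespace Stmt12Aux
open Filter Finset

variable {α : ℕ → ℝ} {E : Set ℕ}

noncomputable def S (α : ℕ → ℝ) (n : ℕ) : ℝ := ∑ k ∈ Finset.Icc 1 n, α k
noncomputable def W (α : ℕ → ℝ) (E : Set ℕ) (n : ℕ) : ℝ :=
  ∑ k ∈ Finset.Icc 1 n, E.indicator (fun k => α k) k
noncomputable def T (E : Set ℕ) (n : ℕ) : ℝ :=
  ∑ k ∈ Finset.Icc 1 n, E.indicator (fun _ => (1:ℝ)) k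
noncomputable def cnt (E : Set ℕ) (n : ℕ) : ℝ :=
  ∑ k ∈ Finset.range (n+1), E.indicator (fun _ => (1:ℝ)) k

lemma aLD_eq (α : ℕ → ℝ) (E : Set ℕ) :
    alphaLowerDensity α E = Filter.liminf (fun n => W α E n / S α n) Filter.atTop := rfl

lemma lD_eq (E : Set ℕ) :
    lowerDensity E = Filter.liminf (fun n : ℕ => cnt E n / n) Filter.atTop := rfl

lemma phi_nat (α : ℕ → ℝ) (n : ℕ) : phiAlpha α (n:ℝ) = S α n := by
  simp [phiAlpha, S]

variable (hα : ∀ k, 1 ≤ k → 0 ≤ α k)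
include hα

lemma S_nonneg (n : ℕ) : 0 ≤ S α n :=
  Finset.sum_nonneg fun k hk => hα k (Finset.mem_Icc.1 hk).1

lemma S_mono {m n : ℕ} (h : m ≤ n) : S α m ≤ S α n := by
  apply Finset.sum_le_sum_of_subset_of_nonneg (Finset.Icc_subset_Icc_right h)
  exact fun k hk _ => hα k (Finset.mem_Icc.1 hk).1

lemma phi_mono {x y : ℝ} (h : x ≤ y) : phiAlpha α x ≤ phiAlpha α y := by
  apply Finset.sum_le_sum_of_subset_of_nonneg (Finset.Icc_subset_Icc_right (Nat.floor_mono h))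
  exact fun k hk _ => hα k (Finset.mem_Icc.1 hk).1

lemma phi_nonneg (x : ℝ) : 0 ≤ phiAlpha α x :=
  Finset.sum_nonneg fun k hk => hα k (Finset.mem_Icc.1 hk).1

omit hα

lemma T_nonneg (E : Set ℕ) (n : ℕ) : 0 ≤ T E n :=
  Finset.sum_nonneg fun _ _ => Set.indicator_apply_nonneg fun _ => zero_le_one

lemma cnt_nonneg (E : Set ℕ) (n : ℕ) : 0 ≤ cnt E n :=
  Finset.sum_nonneg fun _ _ => Set.indicator_apply_nonneg fun _ => zero_le_one

lemma T_le_cnt (E : Set ℕ) (n : ℕ) : T E n ≤ cnt E n := by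
  apply Finset.sum_le_sum_of_subset_of_nonneg
  · intro k hk
    rw [Finset.mem_range]
    exact Nat.lt_succ_of_le (Finset.mem_Icc.1 hk).2
  · exact fun k _ _ => Set.indicator_apply_nonneg fun _ => zero_le_one

lemma T_card (E : Set ℕ) (n : ℕ) [DecidablePred (· ∈ E)] :
    T E n = ((Finset.Icc 1 n).filter (· ∈ E)).card := by
  rw [T, ← Finset.sum_boole]
  refine Finset.sum_congr rfl fun k _ => ?_
  by_cases h : k ∈ E <;> simp [Set.indicator_apply, h]

lemma T_le (E : Set ℕ) (n : ℕ) : T E n ≤ n := by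
  calc T E n ≤ ∑ _k ∈ Finset.Icc 1 n, (1:ℝ) :=
        Finset.sum_le_sum fun k _ =>
          Set.indicator_apply_le' (fun _ => le_refl _) (fun _ => zero_le_one)
    _ = n := by simp

lemma cnt_le (E : Set ℕ) (n : ℕ) : cnt E n ≤ n + 1 := by
  calc cnt E n ≤ ∑ _k ∈ Finset.range (n+1), (1:ℝ) :=
        Finset.sum_le_sum fun k _ =>
          Set.indicator_apply_le' (fun _ => le_refl _) (fun _ => zero_le_one)
    _ = n + 1 := by simp

lemma cnt_le_T_add_one (E : Set ℕ) (n : ℕ) : cnt E n ≤ T E n + 1 := by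
  have hins : Finset.range (n+1) = insert 0 (Finset.Icc 1 n) := by
    ext k
    simp only [Finset.mem_range, Finset.mem_insert, Finset.mem_Icc]
    omega
  have h0 : (0:ℕ) ∉ Finset.Icc 1 n := by simp
  rw [cnt, hins, Finset.sum_insert h0]
  have : E.indicator (fun _ => (1:ℝ)) 0 ≤ 1 :=
    Set.indicator_apply_le' (fun _ => le_refl _) (fun _ => zero_le_one)
  have hT : (∑ k ∈ Finset.Icc 1 n, E.indicator (fun _ => (1:ℝ)) k) = T E n := rfl
  rw [hT]; linarith

include hα
lemma W_nonneg (E : Set ℕ) (n : ℕ) : 0 ≤ W α E n :=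
  Finset.sum_nonneg fun k hk =>
    Set.indicator_apply_nonneg fun _ => hα k (Finset.mem_Icc.1 hk).1

lemma W_le_S (E : Set ℕ) (n : ℕ) : W α E n ≤ S α n :=
  Finset.sum_le_sum fun k hk =>
    Set.indicator_apply_le' (fun _ => le_refl _) (fun _ => hα k (Finset.mem_Icc.1 hk).1)

lemma u_le_one (E : Set ℕ) (n : ℕ) : W α E n / S α n ≤ 1 := by
  rcases (S_nonneg hα n).eq_or_lt with h | h
  · rw [← h, div_zero]; norm_num
  · exact div_le_one_of_le₀ (W_le_S hα E n) h.le
omit hα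

lemma r_le_two (E : Set ℕ) (n : ℕ) : cnt E n / n ≤ 2 := by
  rcases Nat.eq_zero_or_pos n with h | h
  · subst h; rw [Nat.cast_zero, div_zero]; norm_num
  · have hn : (0:ℝ) < n := by exact_mod_cast h
    rw [div_le_iff₀ hn]
    have := cnt_le E n
    have : cnt E n ≤ n + 1 := this
    have h1 : (1:ℝ) ≤ n := by exact_mod_cast h
    linarith

lemma r_nonneg (E : Set ℕ) (n : ℕ) : 0 ≤ cnt E n / n :=
  div_nonneg (cnt_nonneg E n) (Nat.cast_nonneg n)

lemma sum_split (g : ℕ → ℝ) {m n : ℕ} (h : m ≤ n) :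
    ∑ k ∈ Finset.Icc 1 n, g k = ∑ k ∈ Finset.Icc 1 m, g k + ∑ k ∈ Finset.Ioc m n, g k := by
  rw [show Finset.Icc 1 n = Finset.Ioc 0 n from rfl,
    show Finset.Icc 1 m = Finset.Ioc 0 m from rfl,
    Finset.sum_Ioc_consecutive g (Nat.zero_le m) h]


lemma lemmaA (hα : ∀ k, 1 ≤ k → 0 ≤ α k)
    (hmono : ∀ j k : ℕ, 1 ≤ j → j ≤ k → α j ≤ α k)
    (K x₀ : ℝ) (hK : 0 < K) (hx₀ : 1 ≤ x₀)
    (hS : ∀ n : ℕ, x₀ ≤ (n:ℝ) → 0 < S α n)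
    (hΔ : ∀ x : ℝ, x₀ ≤ x → phiAlpha α (2*x) ≤ (K+1) * phiAlpha α x)
    (E : Set ℕ) (h : 0 < alphaLowerDensity α E) : 0 < lowerDensity E := by
  set L := alphaLowerDensity α E with hL
  have hliminf : L = Filter.liminf (fun n => W α E n / S α n) Filter.atTop := rfl
  have hbdd : Filter.IsBoundedUnder (· ≥ ·) Filter.atTop (fun n => W α E n / S α n) :=
    Filter.isBoundedUnder_of ⟨0, fun n => div_nonneg (W_nonneg hα E n) (S_nonneg hα n)⟩
  have hev : ∀ᶠ n : ℕ in Filter.atTop, L/2 < W α E n / S α n :=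
    Filter.eventually_lt_of_lt_liminf (by rw [← hliminf]; linarith) hbdd
  have hev2 : ∀ᶠ n : ℕ in Filter.atTop, x₀ ≤ (n:ℝ) :=
    (tendsto_natCast_atTop_atTop (R := ℝ)).eventually_ge_atTop x₀
  have key : ∀ᶠ n : ℕ in Filter.atTop, L/(2*K) ≤ cnt E n / n := by
    filter_upwards [hev, hev2, Filter.eventually_ge_atTop 1] with n h1 h2 h3
    have hn1 : (1:ℝ) ≤ n := by exact_mod_cast h3
    have npos : (0:ℝ) < n := lt_of_lt_of_le zero_lt_one hn1
    have hSn : 0 < S α n := hS n h2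
    have hW : L/2 * S α n < W α E n := (lt_div_iff₀ hSn).1 h1
    have hWT : W α E n ≤ α n * T E n := by
      rw [W, T, Finset.mul_sum]
      refine Finset.sum_le_sum fun k hk => ?_
      obtain ⟨hk1, hk2⟩ := Finset.mem_Icc.1 hk
      by_cases hkE : k ∈ E
      · simp only [Set.indicator_of_mem hkE, mul_one]
        exact hmono k n hk1 hk2
      · simp [Set.indicator_of_notMem hkE]
    have hαn : (n:ℝ) * α n ≤ K * S α n := by
      have hsplit : S α (2*n) = S α n + ∑ k ∈ Finset.Ioc n (2*n), α k :=
        sum_split α (by omega)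
      have hR : (n:ℝ) * α n ≤ ∑ k ∈ Finset.Ioc n (2*n), α k := by
        have := Finset.card_nsmul_le_sum (Finset.Ioc n (2*n)) α (α n)
          (fun k hk => hmono n k h3 (Finset.mem_Ioc.1 hk).1.le)
        rw [Nat.card_Ioc, nsmul_eq_mul] at this
        have hnn : 2*n - n = n := by omega
        rw [hnn] at this
        exact this
      have hΔn : S α (2*n) ≤ (K+1) * S α n := by
        have := hΔ (n:ℝ) h2
        rw [phi_nat] at this
        have h2n : phiAlpha α (2*(n:ℝ)) = S α (2*n) := by
          rw [show (2*(n:ℝ)) = ((2*n : ℕ) : ℝ) by push_cast; ring, phi_nat]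
        rw [h2n] at this
        exact this
      linarith
    have hT0 : 0 ≤ T E n := T_nonneg E n
    have h5 : (L/2) * n * S α n ≤ (K * T E n) * S α n := by
      nlinarith [mul_le_mul_of_nonneg_left hWT npos.le,
        mul_le_mul_of_nonneg_right hαn hT0]
    have h6 : (L/2) * n ≤ K * T E n := le_of_mul_le_mul_right h5 hSn
    have h7 : L/(2*K) * n ≤ T E n := by
      rw [div_mul_eq_mul_div, div_le_iff₀ (by positivity)]
      nlinarith
    calc L/(2*K) ≤ T E n / n := (le_div_iff₀ npos).2 h7
      _ ≤ cnt E n / n := div_le_div_of_nonneg_right (T_le_cnt E n) npos.le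
  have hcb : Filter.IsCoboundedUnder (· ≥ ·) Filter.atTop (fun n : ℕ => cnt E n / n) :=
    (Filter.isBoundedUnder_of ⟨2, fun n => r_le_two E n⟩).isCoboundedUnder_ge
  have : L/(2*K) ≤ lowerDensity E := by
    rw [lD_eq]
    exact Filter.le_liminf_of_le hcb key
  have : 0 < L/(2*K) := by positivity
  linarith


lemma lemmaB (hα : ∀ k, 1 ≤ k → 0 ≤ α k)
    (hmono : ∀ j k : ℕ, 1 ≤ j → j ≤ k → α j ≤ α k)
    (K x₀ : ℝ) (hK : 0 < K) (hx₀ : 1 ≤ x₀)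
    (hS : ∀ n : ℕ, x₀ ≤ (n:ℝ) → 0 < S α n)
    (hΔ : ∀ x : ℝ, x₀ ≤ x → phiAlpha α (2*x) ≤ (K+1) * phiAlpha α x)
    (E : Set ℕ) (h : 0 < lowerDensity E) : 0 < alphaLowerDensity α E := by
  have hK1 : (1:ℝ) < K + 1 := by linarith
  -- iterated Δ2
  have hiter : ∀ (j : ℕ) (x : ℝ), x₀ ≤ x →
      phiAlpha α ((2:ℝ)^j * x) ≤ (K+1)^j * phiAlpha α x := by
    intro j
    induction j with
    | zero => intro x hx; simp
    | succ j ih =>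
      intro x hx
      have hxpos : 0 < x := lt_of_lt_of_le (lt_of_lt_of_le zero_lt_one hx₀) hx
      have h2j : x₀ ≤ (2:ℝ)^j * x := by
        calc x₀ ≤ x := hx
          _ = 1 * x := (one_mul x).symm
          _ ≤ (2:ℝ)^j * x := by
              apply mul_le_mul_of_nonneg_right (one_le_pow₀ (by norm_num)) hxpos.le
      calc phiAlpha α ((2:ℝ)^(j+1) * x) = phiAlpha α (2 * ((2:ℝ)^j * x)) := by
            ring_nf
        _ ≤ (K+1) * phiAlpha α ((2:ℝ)^j * x) := hΔ _ h2j
        _ ≤ (K+1) * ((K+1)^j * phiAlpha α x) := by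
            apply mul_le_mul_of_nonneg_left (ih x hx) (by linarith)
        _ = (K+1)^(j+1) * phiAlpha α x := by ring
  set L := lowerDensity E with hLdef
  set δ : ℝ := min (L/2) 1 with hδdef
  have hδpos : 0 < δ := lt_min (by linarith) one_pos
  have hδ1 : δ ≤ 1 := min_le_right _ _
  obtain ⟨j, hj⟩ : ∃ j : ℕ, 4/δ < (2:ℝ)^j := pow_unbounded_of_one_lt (4/δ) one_lt_two
  have hliminf : L = Filter.liminf (fun n : ℕ => cnt E n / n) Filter.atTop := rfl
  have hbdd : Filter.IsBoundedUnder (· ≥ ·) Filter.atTop (fun n : ℕ => cnt E n / n) :=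
    Filter.isBoundedUnder_of ⟨0, fun n => r_nonneg E n⟩
  have hev : ∀ᶠ n : ℕ in Filter.atTop, L/2 < cnt E n / n :=
    Filter.eventually_lt_of_lt_liminf (by rw [← hliminf]; linarith) hbdd
  have hev2 : ∀ᶠ n : ℕ in Filter.atTop, 4*x₀/δ ≤ (n:ℝ) :=
    (tendsto_natCast_atTop_atTop (R := ℝ)).eventually_ge_atTop _
  set c : ℝ := ((K+1)^j)⁻¹ with hc
  have hcpos : 0 < c := by positivity
  have key : ∀ᶠ n : ℕ in Filter.atTop, c ≤ W α E n / S α n := by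
    filter_upwards [hev, hev2] with n h1 h2
    have hx4 : x₀ ≤ δ/4 * n := by
      rw [div_mul_eq_mul_div, le_div_iff₀ (by norm_num : (0:ℝ) < 4)]
      calc x₀ * 4 = 4 * x₀ := by ring
        _ = 4*x₀/δ * δ := by field_simp
        _ ≤ (n:ℝ) * δ := by
            apply mul_le_mul_of_nonneg_right h2 hδpos.le
        _ = δ * n := by ring
    have h14 : (1:ℝ) ≤ δ/4 * n := le_trans hx₀ hx4
    have npos : (0:ℝ) < n := by nlinarith
    have hδn : δ * n < cnt E n := (lt_div_iff₀ npos).1 (lt_of_le_of_lt (min_le_left _ _) h1)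
    set m : ℕ := ⌊δ/4 * (n:ℝ)⌋₊ with hm
    have hm_le : (m:ℝ) ≤ δ/4 * n := Nat.floor_le (by positivity)
    have hm1 : δ/4 * n < (m:ℝ) + 1 := Nat.lt_floor_add_one _
    have hx₀m : x₀ ≤ ((m:ℝ) + 1) := le_trans hx4 hm1.le
    have hmn : m ≤ n := by
      have : (m:ℝ) ≤ (n:ℝ) := by nlinarith
      exact_mod_cast this
    have hTn : δ * n - 1 ≤ T E n := by
      have := cnt_le_T_add_one E n
      linarith
    have hTm : T E m ≤ (m:ℝ) := T_le E m
    have hkey1 : (m:ℝ) + 1 ≤ T E n - T E m := by nlinarith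
    have hWsplit := sum_split (fun k => E.indicator (fun k => α k) k) hmn
    have hTsplit := sum_split (fun k => E.indicator (fun _ => (1:ℝ)) k) hmn
    have hαm1 : 0 ≤ α (m+1) := hα _ (by omega)
    have hWlow : α (m+1) * (T E n - T E m) ≤ W α E n := by
      have hsum1 : ∑ k ∈ Finset.Ioc m n, E.indicator (fun _ => (1:ℝ)) k = T E n - T E m := by
        have : T E n = T E m + ∑ k ∈ Finset.Ioc m n, E.indicator (fun _ => (1:ℝ)) k := hTsplit
        linarith
      have hpt : ∀ k ∈ Finset.Ioc m n,
          α (m+1) * E.indicator (fun _ => (1:ℝ)) k ≤ E.indicator (fun k => α k) k := by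
        intro k hk
        obtain ⟨hk1, hk2⟩ := Finset.mem_Ioc.1 hk
        by_cases hkE : k ∈ E
        · simp only [Set.indicator_of_mem hkE, mul_one]
          exact hmono (m+1) k (by omega) (by omega)
        · simp [Set.indicator_of_notMem hkE]
      calc α (m+1) * (T E n - T E m)
          = ∑ k ∈ Finset.Ioc m n, α (m+1) * E.indicator (fun _ => (1:ℝ)) k := by
            rw [← Finset.mul_sum, hsum1]
        _ ≤ ∑ k ∈ Finset.Ioc m n, E.indicator (fun k => α k) k := Finset.sum_le_sum hpt
        _ ≤ W α E n := by
            have hWm : 0 ≤ W α E m := W_nonneg hα E m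
            have : W α E n = W α E m + ∑ k ∈ Finset.Ioc m n, E.indicator (fun k => α k) k :=
              hWsplit
            linarith
    have hS1 : S α (m+1) ≤ ((m:ℝ)+1) * α (m+1) := by
      have := Finset.sum_le_card_nsmul (Finset.Icc 1 (m+1)) α (α (m+1))
        (fun k hk => hmono k (m+1) (Finset.mem_Icc.1 hk).1 (Finset.mem_Icc.1 hk).2)
      rw [Nat.card_Icc, nsmul_eq_mul] at this
      have hmm : m + 1 + 1 - 1 = m + 1 := by omega
      rw [hmm] at this
      calc S α (m+1) ≤ ((m+1 : ℕ):ℝ) * α (m+1) := this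
        _ = ((m:ℝ)+1) * α (m+1) := by push_cast; ring
    have hWS : S α (m+1) ≤ W α E n := by
      calc S α (m+1) ≤ ((m:ℝ)+1) * α (m+1) := hS1
        _ ≤ (T E n - T E m) * α (m+1) := mul_le_mul_of_nonneg_right hkey1 hαm1
        _ = α (m+1) * (T E n - T E m) := by ring
        _ ≤ W α E n := hWlow
    have hxn : x₀ ≤ (n:ℝ) := by nlinarith
    have hSn : 0 < S α n := hS n hxn
    have hSm : 0 < S α (m+1) := hS (m+1) (by push_cast; exact hx₀m)
    have hn2j : (n:ℝ) ≤ (2:ℝ)^j * ((m:ℝ)+1) := by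
      have h4δ : 0 < 4/δ := by positivity
      calc (n:ℝ) = (4/δ) * (δ/4 * n) := by field_simp
        _ ≤ (4/δ) * ((m:ℝ)+1) := by
            apply mul_le_mul_of_nonneg_left hm1.le h4δ.le
        _ ≤ (2:ℝ)^j * ((m:ℝ)+1) := by
            apply mul_le_mul_of_nonneg_right hj.le (by positivity)
    have hSnK : S α n ≤ (K+1)^j * S α (m+1) := by
      calc S α n = phiAlpha α (n:ℝ) := (phi_nat α n).symm
        _ ≤ phiAlpha α ((2:ℝ)^j * (((m+1:ℕ)):ℝ)) := by
            apply phi_mono hα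
            push_cast
            exact hn2j
        _ ≤ (K+1)^j * phiAlpha α ((m+1:ℕ):ℝ) := hiter j _ (by push_cast; exact hx₀m)
        _ = (K+1)^j * S α (m+1) := by rw [phi_nat]
    rw [le_div_iff₀ hSn]
    calc c * S α n ≤ c * ((K+1)^j * S α (m+1)) := by
          apply mul_le_mul_of_nonneg_left hSnK hcpos.le
      _ = S α (m+1) := by
          rw [hc]; field_simp
      _ ≤ W α E n := hWS
  have hcb : Filter.IsCoboundedUnder (· ≥ ·) Filter.atTop (fun n : ℕ => W α E n / S α n) :=
    (Filter.isBoundedUnder_of ⟨1, fun n => u_le_one hα E n⟩).isCoboundedUnder_ge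
  have hfin : c ≤ alphaLowerDensity α E := by
    rw [aLD_eq]
    exact Filter.le_liminf_of_le hcb key
  linarith


lemma lemmaC (hα : ∀ k, 1 ≤ k → 0 ≤ α k)
    (N₀ : ℕ) (hS : ∀ n : ℕ, N₀ ≤ n → 0 < S α n)
    (hnd : ∀ K : ℝ, 0 < K → ∀ x₀ : ℝ, ∃ x, x₀ ≤ x ∧ K * phiAlpha α x < phiAlpha α (2*x)) :
    ∃ E : Set ℕ, ¬ (0 < alphaLowerDensity α E) ∧ 0 < lowerDensity E := by
  classical
  -- step existence
  have key : ∀ (j N : ℕ), ∃ n : ℕ, N ≤ n ∧ ((j:ℝ)+1) * S α n < S α (2*n+1) := by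
    intro j N
    obtain ⟨x, hx1, hx2⟩ := hnd ((j:ℝ)+1) (by positivity) (N:ℝ)
    have hx0 : (0:ℝ) ≤ x := le_trans (Nat.cast_nonneg N) hx1
    refine ⟨⌊x⌋₊, Nat.le_floor hx1, ?_⟩
    have h1 : phiAlpha α x = S α ⌊x⌋₊ := rfl
    have h2 : phiAlpha α (2*x) = S α ⌊2*x⌋₊ := rfl
    have h3 : ⌊2*x⌋₊ ≤ 2*⌊x⌋₊ + 1 := by
      have hlt : x < ⌊x⌋₊ + 1 := Nat.lt_floor_add_one x
      have : (2*x : ℝ) < ((2*⌊x⌋₊ + 2 : ℕ) : ℝ) := by push_cast; linarith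
      have := (Nat.floor_lt (by positivity)).2 this
      omega
    calc ((j:ℝ)+1) * S α ⌊x⌋₊ = ((j:ℝ)+1) * phiAlpha α x := by rw [h1]
      _ < phiAlpha α (2*x) := hx2
      _ = S α ⌊2*x⌋₊ := h2
      _ ≤ S α (2*⌊x⌋₊+1) := S_mono hα h3
  -- recursive sequence
  set f : ℕ → ℕ := fun j => Nat.rec (key 0 (N₀+1)).choose
    (fun j prev => (key (j+1) (4*(prev+1)*(j+2))).choose) j with hf
  have hf0 : N₀+1 ≤ f 0 ∧ (((0:ℕ):ℝ)+1) * S α (f 0) < S α (2*f 0+1) := by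
    have h := (key 0 (N₀+1)).choose_spec
    have heq0 : f 0 = (key 0 (N₀+1)).choose := rfl
    rw [← heq0] at h
    exact h
  have hfsucc : ∀ j : ℕ, 4*(f j+1)*(j+2) ≤ f (j+1) ∧
      (((j:ℝ)+1)+1) * S α (f (j+1)) < S α (2*f (j+1)+1) := by
    intro j
    have := (key (j+1) (4*(f j+1)*(j+2))).choose_spec
    have heq : f (j+1) = (key (j+1) (4*(f j+1)*(j+2))).choose := rfl
    rw [← heq] at this
    obtain ⟨h1, h2⟩ := this
    refine ⟨h1, ?_⟩
    convert h2 using 3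
    push_cast; ring
  have hgrow : ∀ j : ℕ, ((j:ℝ)+1) * S α (f j) < S α (2*f j+1) := by
    intro j
    cases j with
    | zero => simpa using hf0.2
    | succ j =>
      have := (hfsucc j).2
      convert this using 3
      push_cast; ring
  have hsp : ∀ j : ℕ, 4*(f j+1)*(j+2) ≤ f (j+1) := fun j => (hfsucc j).1
  have hstep : ∀ j : ℕ, f j + 1 ≤ f (j+1) := by
    intro j
    have h1 : (f j + 1) * 1 ≤ (4*(f j+1)) * (j+2) :=
      Nat.mul_le_mul (by omega) (by omega)
    have := hsp j
    omega
  have hN₀ : ∀ j : ℕ, N₀+1 ≤ f j := by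
    intro j
    induction j with
    | zero => exact hf0.1
    | succ j ih => exact le_trans ih (by have := hstep j; omega)
  have hjf : ∀ j : ℕ, j ≤ f j := by
    intro j
    induction j with
    | zero => omega
    | succ j ih => have := hstep j; omega
  have hfmono : Monotone f := monotone_nat_of_le_succ (fun j => by have := hstep j; omega)
  have hsum : ∀ j, 4 * (∑ i ∈ Finset.range j, (f i + 1)) ≤ f j := by
    intro j
    induction j with
    | zero => simp
    | succ j ih =>
      rw [Finset.sum_range_succ]
      have h1 := hsp j
      have h2 : 8*(f j+1) ≤ 4*(f j+1)*(j+2) := by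
        have : 4*(j+2) ≥ 8 := by omega
        calc 8*(f j+1) ≤ (4*(j+2))*(f j+1) := Nat.mul_le_mul_right _ this
          _ = 4*(f j+1)*(j+2) := by ring
      omega
  -- the set E
  set E : Set ℕ := {k : ℕ | ∀ i, k ≤ f i ∨ 2*f i + 1 < k} with hE
  refine ⟨E, ?_, ?_⟩
  · -- alpha lower density not positive
    intro hpos
    set L := alphaLowerDensity α E with hL
    have hliminf : L = Filter.liminf (fun n => W α E n / S α n) Filter.atTop := rfl
    have hbdd : Filter.IsBoundedUnder (· ≥ ·) Filter.atTop (fun n => W α E n / S α n) :=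
      Filter.isBoundedUnder_of ⟨0, fun n => div_nonneg (W_nonneg hα E n) (S_nonneg hα n)⟩
    have hev : ∀ᶠ n : ℕ in Filter.atTop, L/2 < W α E n / S α n :=
      Filter.eventually_lt_of_lt_liminf (by rw [← hliminf]; linarith) hbdd
    obtain ⟨M, hM⟩ := Filter.eventually_atTop.1 hev
    obtain ⟨j0, hj0⟩ : ∃ j0 : ℕ, 2/L < (j0:ℝ) := exists_nat_gt (2/L)
    set j := max M j0 with hj
    set N := 2*f j + 1 with hN
    have hMN : M ≤ N := by
      have := hjf j
      omega
    have hub : W α E N ≤ S α (f j) := by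
      have hsplit := sum_split (fun k => E.indicator (fun k => α k) k) (show f j ≤ N by omega)
      have hzero : ∑ k ∈ Finset.Ioc (f j) N, E.indicator (fun k => α k) k = 0 := by
        apply Finset.sum_eq_zero
        intro k hk
        obtain ⟨hk1, hk2⟩ := Finset.mem_Ioc.1 hk
        have hkE : k ∉ E := by
          intro hkE
          rcases hkE j with h' | h'
          · omega
          · omega
        exact Set.indicator_of_notMem hkE _
      have : W α E N = W α E (f j) + 0 := by rw [← hzero]; exact hsplit
      rw [this, add_zero]
      exact W_le_S hα E (f j)
    have hSN : 0 < S α N := hS N (by have := hN₀ j; omega)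
    have hSfj : 0 < S α (f j) := hS (f j) (by have := hN₀ j; omega)
    have huN : W α E N / S α N < 1/((j:ℝ)+1) := by
      rw [div_lt_div_iff₀ hSN (by positivity)]
      calc W α E N * ((j:ℝ)+1) ≤ S α (f j) * ((j:ℝ)+1) := by
            apply mul_le_mul_of_nonneg_right hub (by positivity)
        _ = ((j:ℝ)+1) * S α (f j) := by ring
        _ < S α (2*f j+1) := hgrow j
        _ = 1 * S α N := by rw [one_mul]
    have hLN := hM N hMN
    have hj0j : (j0:ℝ) ≤ (j:ℝ) := by exact_mod_cast le_max_right M j0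
    have hLpos : 0 < L := hpos
    have h2L : 2/L < (j:ℝ) + 1 := by linarith
    have : 1/((j:ℝ)+1) < L/2 := by
      rw [div_lt_div_iff₀ (by positivity) (by norm_num)]
      rw [div_lt_iff₀ hLpos] at h2L
      linarith
    linarith
  · -- natural lower density positive
    have key2 : ∀ N : ℕ, f 0 < N → 3 ≤ N → (1:ℝ)/4 ≤ cnt E N / N := by
      intro N hf0N hN3
      set j := Nat.findGreatest (fun i => f i < N) N with hjdef
      have hPj : f j < N := Nat.findGreatest_spec (P := fun i => f i < N) (Nat.zero_le N) hf0N
      have hmax : ∀ i, j < i → N ≤ f i := by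
        intro i hi
        by_cases hiN : i ≤ N
        · exact le_of_not_gt (Nat.findGreatest_is_greatest (P := fun i => f i < N) hi hiN)
        · have := hjf i; omega
      set TN := ((Finset.Icc 1 N).filter (· ∈ E)).card with hTN
      set D := ((Finset.Icc 1 N).filter (fun k => ¬ (k ∈ E))).card with hD
      have hTD : TN + D = N := by
        rw [hTN, hD, Finset.card_filter_add_card_filter_not, Nat.card_Icc]
        omega
      have hsub : (Finset.Icc 1 N).filter (fun k => ¬ (k ∈ E)) ⊆
          (Finset.range (j+1)).biUnion (fun i => Finset.Ioc (f i) (min (2*f i+1) N)) := by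
        intro k hk
        obtain ⟨hkIcc, hkE⟩ := Finset.mem_filter.1 hk
        obtain ⟨hk1, hk2⟩ := Finset.mem_Icc.1 hkIcc
        have : ∃ i, f i < k ∧ k ≤ 2*f i + 1 := by
          by_contra hcon
          push_neg at hcon
          exact hkE (fun i => by rcases le_or_gt k (f i) with h' | h'
                                 · exact Or.inl h'
                                 · exact Or.inr (hcon i h'))
        obtain ⟨i, hik1, hik2⟩ := this
        have hij : i ≤ j := by
          by_contra hcon
          push_neg at hcon
          have := hmax i hcon
          omega
        rw [Finset.mem_biUnion]
        exact ⟨i, Finset.mem_range.2 (by omega),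
          Finset.mem_Ioc.2 ⟨hik1, le_min hik2 hk2⟩⟩
      have hDle : D ≤ ∑ i ∈ Finset.range (j+1), (min (2*f i+1) N - f i) := by
        calc D ≤ ((Finset.range (j+1)).biUnion
              (fun i => Finset.Ioc (f i) (min (2*f i+1) N))).card := Finset.card_le_card hsub
          _ ≤ ∑ i ∈ Finset.range (j+1), (Finset.Ioc (f i) (min (2*f i+1) N)).card :=
              Finset.card_biUnion_le
          _ = ∑ i ∈ Finset.range (j+1), (min (2*f i+1) N - f i) :=
              Finset.sum_congr rfl (fun i _ => Nat.card_Ioc _ _)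
      have hDle2 : D ≤ (∑ i ∈ Finset.range j, (f i + 1)) + (min (2*f j+1) N - f j) := by
        rw [Finset.sum_range_succ] at hDle
        have : ∑ i ∈ Finset.range j, (min (2*f i+1) N - f i) ≤
            ∑ i ∈ Finset.range j, (f i + 1) :=
          Finset.sum_le_sum (fun i _ => by omega)
        omega
      have hs := hsum j
      have hf1 : 1 ≤ f j := by have := hN₀ j; omega
      have hgoal : N ≤ 4 * TN := by omega
      -- real version
      have hNpos : (0:ℝ) < N := by exact_mod_cast (by omega : 0 < N)
      have hTcnt : (TN : ℝ) ≤ cnt E N := by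
        rw [← T_card]
        exact T_le_cnt E N
      rw [le_div_iff₀ hNpos]
      have : (N:ℝ) ≤ 4 * TN := by exact_mod_cast hgoal
      linarith
    have hcb : Filter.IsCoboundedUnder (· ≥ ·) Filter.atTop (fun n : ℕ => cnt E n / n) :=
      (Filter.isBoundedUnder_of ⟨2, fun n => r_le_two E n⟩).isCoboundedUnder_ge
    have hevd : ∀ᶠ N : ℕ in Filter.atTop, (1:ℝ)/4 ≤ cnt E N / N := by
      filter_upwards [Filter.eventually_ge_atTop (max (f 0 + 1) 3)] with N hN
      exact key2 N (by omega) (by omega)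
    have : (1:ℝ)/4 ≤ lowerDensity E := by
      rw [lD_eq]
      exact Filter.le_liminf_of_le hcb hevd
    linarith

end Stmt12Aux

/-- Proposition 3.3: for a non-decreasing admissible sequence `α` with
`(φ_α(n)/φ_α(Cn))_n` eventually non-increasing for some `C > 1`, the densities
`dlow_α` and `dlow` are equivalent iff `φ_α` satisfies `Δ2`. -/
theorem stmt12 (α : ℕ → ℝ) (hadm : Admissible α)
    (hmono : ∀ j k : ℕ, 1 ≤ j → j ≤ k → α j ≤ α k)
    (hratio : ∃ C : ℝ, 1 < C ∧ ∃ n₀ : ℕ, ∀ m n : ℕ, n₀ ≤ m → m ≤ n →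
      phiAlpha α n / phiAlpha α (C * n) ≤ phiAlpha α m / phiAlpha α (C * m)) :
    (∀ E : Set ℕ, 0 < alphaLowerDensity α E ↔ 0 < lowerDensity E) ↔ Delta2 α := by
  classical
  obtain ⟨hα, htop, -⟩ := hadm
  have hev1 : ∀ᶠ n : ℕ in Filter.atTop, 1 ≤ Stmt12Aux.S α n :=
    htop.eventually_ge_atTop 1
  obtain ⟨N₀, hN₀⟩ := Filter.eventually_atTop.1 hev1
  have hSpos : ∀ n : ℕ, N₀ ≤ n → 0 < Stmt12Aux.S α n := fun n hn =>
    lt_of_lt_of_le zero_lt_one (hN₀ n hn)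
  constructor
  · intro hequiv
    by_contra hΔ
    unfold Delta2 at hΔ
    push_neg at hΔ
    obtain ⟨E, hE1, hE2⟩ := Stmt12Aux.lemmaC hα N₀ hSpos hΔ
    exact hE1 ((hequiv E).2 hE2)
  · intro hΔ E
    obtain ⟨K, hK, x₀, hΔ2⟩ := hΔ
    set x₁ := max x₀ (max 1 ((N₀:ℝ))) with hx₁
    have hx₁1 : (1:ℝ) ≤ x₁ := le_trans (le_max_left 1 _) (le_max_right _ _)
    have hS' : ∀ n : ℕ, x₁ ≤ (n:ℝ) → 0 < Stmt12Aux.S α n := by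
      intro n hn
      apply hSpos n
      have h1 : (N₀:ℝ) ≤ (n:ℝ) :=
        le_trans (le_trans (le_max_right 1 _) (le_max_right x₀ _)) hn
      exact_mod_cast h1
    have hΔ' : ∀ x : ℝ, x₁ ≤ x → phiAlpha α (2*x) ≤ (K+1) * phiAlpha α x := by
      intro x hx
      have h1 := hΔ2 x (le_trans (le_max_left _ _) hx)
      have h2 : 0 ≤ phiAlpha α x := Stmt12Aux.phi_nonneg hα x
      nlinarith
    constructor
    · exact Stmt12Aux.lemmaA hα hmono K x₁ hK hx₁1 hS' hΔ' E
    · exact Stmt12Aux.lemmaB hα hmono K x₁ hK hx₁1 hS' hΔ' E
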